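/- arXiv:1509.02633 — 3 statements merged into one kernel-verified Lean document; each statement's English description precedes it below -/
import Mathlib

section
/- Fix M ≥ 2, K ≥ 1, 0 < τ_p < T, β_j > 0 for all j, and an energy budget E_max > 0. Suppose (p_p, p_u) is a feasible point of the power-control problem, i.e., p_p^j ≥ 0, p_u^j ≥ 0 and τ_p p_p^j + (T−τ_p) p_u^j ≤ E_max for all j, and suppose that for some user k with p_u^k > 0 the energy constraint is slack: τ_p p_p^k + (T−τ_p) p_u^k < E_max. Then there exists another feasible point (p_p', p_u') with p_u' = p_u, p_p'^j = p_p^j for j ≠ k, such that R_j(p_p', p_u') = R_j(p_p, p_u) for all j ≠ k and R_k(p_p', p_u') > R_k(p_p, p_u). Consequently, for any utility U(R_1,…,R_K) that is strictly increasing in each argument, every maximizer of U over the feasible set satisfies τ_p p_p^k + (T−τ_p) p_u^k = E_max for every user k with p_u^k > 0. -/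
/-- The uplink SINR of user `k` under MRC with pilot powers `pp` and data powers `pu`. -/
noncomputable def SINR (M K : ℕ) (τp : ℝ) (β pp pu : Fin K → ℝ) (k : Fin K) : ℝ :=
  ((M : ℝ) - 1) * pu k * pp k * (β k) ^ 2 * τp /
    (1 + ∑ j, β j * pu j + τp * β k * pp k +
      τp * pp k * β k * ∑ j ∈ Finset.univ.erase k, β j * pu j)

/-- The achievable spectral efficiency `R_k = (1 - τ_p/T) log₂(1 + SINR_k)` of user `k`. -/
noncomputable def SE (M K : ℕ) (τp T : ℝ) (β pp pu : Fin K → ℝ) (k : Fin K) : ℝ :=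
  (1 - τp / T) * Real.logb 2 (1 + SINR M K τp β pp pu k)

lemma sinr_nonneg (M K : ℕ) (hM : 2 ≤ M) (τp : ℝ) (hτp : 0 < τp)
    (β pp pu : Fin K → ℝ) (hβ : ∀ j, 0 < β j) (hpp : ∀ j, 0 ≤ pp j)
    (hpu : ∀ j, 0 ≤ pu j) (k : Fin K) :
    0 ≤ SINR M K τp β pp pu k := by
  have hS1 : 0 ≤ ∑ j, β j * pu j :=
    Finset.sum_nonneg fun j _ => mul_nonneg (hβ j).le (hpu j)
  have hS2 : 0 ≤ ∑ j ∈ Finset.univ.erase k, β j * pu j :=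
    Finset.sum_nonneg fun j _ => mul_nonneg (hβ j).le (hpu j)
  have hM1 : (0:ℝ) ≤ (M:ℝ) - 1 := by
    have : (2:ℝ) ≤ (M:ℝ) := by exact_mod_cast hM
    linarith
  have hb := (hβ k).le
  have hppk := hpp k
  unfold SINR
  apply div_nonneg
  · exact mul_nonneg (mul_nonneg (mul_nonneg (mul_nonneg hM1 (hpu k)) (hpp k))
      (sq_nonneg _)) hτp.le
  · have : 0 ≤ τp * β k * pp k := by positivity
    have : 0 ≤ τp * pp k * β k * ∑ j ∈ Finset.univ.erase k, β j * pu j := by positivity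
    nlinarith

lemma sinr_mono (M K : ℕ) (hM : 2 ≤ M) (τp : ℝ) (hτp : 0 < τp)
    (β : Fin K → ℝ) (hβ : ∀ j, 0 < β j) (pu : Fin K → ℝ) (hpu : ∀ j, 0 ≤ pu j)
    (k : Fin K) (hpuk : 0 < pu k) (pp pp' : Fin K → ℝ)
    (hx : 0 ≤ pp k) (hxy : pp k < pp' k) :
    SINR M K τp β pp pu k < SINR M K τp β pp' pu k := by
  have hS1 : 0 ≤ ∑ j, β j * pu j :=
    Finset.sum_nonneg fun j _ => mul_nonneg (hβ j).le (hpu j)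
  have hS2 : 0 ≤ ∑ j ∈ Finset.univ.erase k, β j * pu j :=
    Finset.sum_nonneg fun j _ => mul_nonneg (hβ j).le (hpu j)
  have hM1 : (0:ℝ) < (M:ℝ) - 1 := by
    have : (2:ℝ) ≤ (M:ℝ) := by exact_mod_cast hM
    linarith
  have hb := hβ k
  have hx' : 0 ≤ pp' k := le_of_lt (lt_of_le_of_lt hx hxy)
  unfold SINR
  set S1 := ∑ j, β j * pu j
  set S2 := ∑ j ∈ Finset.univ.erase k, β j * pu j
  have hd1 : 0 < 1 + S1 + τp * β k * pp k + τp * pp k * β k * S2 := by positivity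
  have hd2 : 0 < 1 + S1 + τp * β k * pp' k + τp * pp' k * β k * S2 := by positivity
  rw [div_lt_div_iff₀ hd1 hd2]
  nlinarith [mul_pos (mul_pos (mul_pos hM1 hpuk) (mul_pos (pow_pos hb 2) hτp))
      (sub_pos.mpr hxy), mul_nonneg hS2 (le_of_lt (mul_pos (mul_pos (mul_pos (mul_pos
      (mul_pos hM1 hpuk) (pow_pos hb 2)) hτp) (mul_pos hτp hb)) (sub_pos.mpr hxy)))]

lemma se_mono (M K : ℕ) (hM : 2 ≤ M) (τp T : ℝ) (hτp : 0 < τp) (hτpT : τp < T)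
    (β : Fin K → ℝ) (hβ : ∀ j, 0 < β j) (pu : Fin K → ℝ) (hpu : ∀ j, 0 ≤ pu j)
    (k : Fin K) (hpuk : 0 < pu k) (pp pp' : Fin K → ℝ)
    (hpp : ∀ j, 0 ≤ pp j) (hpp' : ∀ j, 0 ≤ pp' j) (hxy : pp k < pp' k) :
    SE M K τp T β pp pu k < SE M K τp T β pp' pu k := by
  have hT : 0 < T := hτp.trans hτpT
  have hcoef : 0 < 1 - τp / T := by
    rw [sub_pos, div_lt_one hT]; exact hτpT
  have h1 : 0 ≤ SINR M K τp β pp pu k :=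
    sinr_nonneg M K hM τp hτp β pp pu hβ hpp hpu k
  have h2 : SINR M K τp β pp pu k < SINR M K τp β pp' pu k :=
    sinr_mono M K hM τp hτp β hβ pu hpu k hpuk pp pp' (hpp k) hxy
  unfold SE
  apply mul_lt_mul_of_pos_left _ hcoef
  apply Real.logb_lt_logb one_lt_two (by linarith) (by linarith)

lemma se_other (M K : ℕ) (τp T : ℝ) (β pu pp pp' : Fin K → ℝ) (k j : Fin K)
    (hj : pp' j = pp j) : SE M K τp T β pp' pu j = SE M K τp T β pp pu j := by
  unfold SE SINR
  rw [hj]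

lemma key (M K : ℕ) (hM : 2 ≤ M) (τp T Emax : ℝ)
    (hτp : 0 < τp) (hτpT : τp < T)
    (β : Fin K → ℝ) (hβ : ∀ j, 0 < β j)
    (pp pu : Fin K → ℝ) (hpp : ∀ j, 0 ≤ pp j) (hpu : ∀ j, 0 ≤ pu j)
    (hfeas : ∀ j, τp * pp j + (T - τp) * pu j ≤ Emax)
    (k : Fin K) (hpuk : 0 < pu k)
    (hslack : τp * pp k + (T - τp) * pu k < Emax) :
    ∃ pp' : Fin K → ℝ,
      (∀ j, 0 ≤ pp' j) ∧
      (∀ j, τp * pp' j + (T - τp) * pu j ≤ Emax) ∧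
      (∀ j, j ≠ k → pp' j = pp j) ∧
      (∀ j, j ≠ k → SE M K τp T β pp' pu j = SE M K τp T β pp pu j) ∧
      SE M K τp T β pp pu k < SE M K τp T β pp' pu k := by
  set ε := Emax - (τp * pp k + (T - τp) * pu k) with hε
  have hεpos : 0 < ε := by simp [hε]; linarith
  refine ⟨Function.update pp k (pp k + ε / τp), ?_, ?_, ?_, ?_, ?_⟩
  · intro j
    by_cases hj : j = k
    · subst hj; rw [Function.update_self]
      have h := div_pos hεpos hτp
      linarith [hpp j]
    · rw [Function.update_of_ne hj]; exact hpp j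
  · intro j
    by_cases hj : j = k
    · subst hj; rw [Function.update_self]
      have h : τp * (pp j + ε / τp) = τp * pp j + ε := by
        field_simp
      rw [h]; linarith
    · rw [Function.update_of_ne hj]; exact hfeas j
  · intro j hj; exact Function.update_of_ne hj _ _
  · intro j hj; exact se_other M K τp T β pu pp _ k j (Function.update_of_ne hj _ _)
  · apply se_mono M K hM τp T hτp hτpT β hβ pu hpu k hpuk
    · exact hpp
    · intro j
      by_cases hj : j = k
      · subst hj; rw [Function.update_self]
        have h := div_pos hεpos hτp
        linarith [hpp j]
      · rw [Function.update_of_ne hj]; exact hpp j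
    · rw [Function.update_self]
      have : 0 < ε / τp := by positivity
      linarith

/-- If a feasible point has a slack energy constraint for a user `k` with
`p_u^k > 0`, then one can increase that user's pilot power to get another feasible point
that strictly improves `R_k` without changing any other `R_j`.  Consequently, for any
utility strictly increasing in each argument, every maximizer satisfies the energy
constraint with equality for every user with positive data power. -/
theorem stmt_3 (M K : ℕ) (hM : 2 ≤ M) (hK : 1 ≤ K) (τp T Emax : ℝ)
    (hτp : 0 < τp) (hτpT : τp < T) (hE : 0 < Emax)
    (β : Fin K → ℝ) (hβ : ∀ j, 0 < β j)
    (pp pu : Fin K → ℝ) (hpp : ∀ j, 0 ≤ pp j) (hpu : ∀ j, 0 ≤ pu j)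
    (hfeas : ∀ j, τp * pp j + (T - τp) * pu j ≤ Emax)
    (k : Fin K) (hpuk : 0 < pu k)
    (hslack : τp * pp k + (T - τp) * pu k < Emax) :
    (∃ pp' : Fin K → ℝ,
      (∀ j, 0 ≤ pp' j) ∧
      (∀ j, τp * pp' j + (T - τp) * pu j ≤ Emax) ∧
      (∀ j, j ≠ k → pp' j = pp j) ∧
      (∀ j, j ≠ k → SE M K τp T β pp' pu j = SE M K τp T β pp pu j) ∧
      SE M K τp T β pp pu k < SE M K τp T β pp' pu k) ∧
    (∀ U : (Fin K → ℝ) → ℝ,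
      (∀ (v : Fin K → ℝ) (i : Fin K) (x y : ℝ), x < y →
        U (Function.update v i x) < U (Function.update v i y)) →
      ∀ qp qu : Fin K → ℝ,
        (∀ j, 0 ≤ qp j) → (∀ j, 0 ≤ qu j) →
        (∀ j, τp * qp j + (T - τp) * qu j ≤ Emax) →
        (∀ rp ru : Fin K → ℝ, (∀ j, 0 ≤ rp j) → (∀ j, 0 ≤ ru j) →
          (∀ j, τp * rp j + (T - τp) * ru j ≤ Emax) →
          U (fun i => SE M K τp T β rp ru i) ≤ U (fun i => SE M K τp T β qp qu i)) →
        ∀ k' : Fin K, 0 < qu k' → τp * qp k' + (T - τp) * qu k' = Emax) := by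
  constructor
  · exact key M K hM τp T Emax hτp hτpT β hβ pp pu hpp hpu hfeas k hpuk hslack
  · intro U hU qp qu hqp hqu hqfeas hmax k' hquk'
    by_contra hne
    have hslack' : τp * qp k' + (T - τp) * qu k' < Emax :=
      lt_of_le_of_ne (hqfeas k') hne
    obtain ⟨qp', hqp', hqfeas', hother, hSEother, hSEk⟩ :=
      key M K hM τp T Emax hτp hτpT β hβ qp qu hqp hqu hqfeas k' hquk' hslack'
    set v : Fin K → ℝ := fun i => SE M K τp T β qp qu i with hv
    have hw : (fun i => SE M K τp T β qp' qu i)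
        = Function.update v k' (SE M K τp T β qp' qu k') := by
      funext i
      by_cases hi : i = k'
      · subst hi; rw [Function.update_self]
      · rw [Function.update_of_ne hi, hv]
        exact hSEother i hi
    have hlt : U v < U (fun i => SE M K τp T β qp' qu i) := by
      rw [hw]
      have := hU v k' (v k') (SE M K τp T β qp' qu k') hSEk
      rwa [Function.update_eq_self] at this
    have := hmax qp' qu hqp' hqu hqfeas'
    rw [hv] at hlt
    linarith
end

section
/- Let a > 0, b > 0 and c ≥ 0 be real numbers. Then the function f(x) = x · log(1 + a/(b x + c)) is strictly increasing on (0, ∞). -/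
/-!
With `u = b x + c`, the derivative is `f'(x) = log (1 + a/u) - a b x / (u (u + a))`. Since `c ≥ 0`
gives `b x ≤ u`, the subtracted term is at most `a / (u + a) = y / (1 + y)` for `y = a / u`,
which is strictly below `log (1 + y)`.
-/

open Real Set

lemma div_one_add_lt_log_one_add {y : ℝ} (hy : -1 < y) (hy0 : y ≠ 0) :
    y / (1 + y) < log (1 + y) := by
  have hpos : 0 < 1 + y := by linarith
  have h := log_lt_sub_one_of_pos (inv_pos.2 hpos) (by
    rw [Ne, inv_eq_one]
    contrapose! hy0
    linarith)
  rw [log_inv] at h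
  have : (1 + y)⁻¹ - 1 = -(y / (1 + y)) := by
    field_simp
    ring
  linarith

lemma hasDerivAt_mul_log_one_add_div {a b c x : ℝ} (hu : 0 < b * x + c)
    (hv : 0 < b * x + c + a) :
    HasDerivAt (fun x => x * log (1 + a / (b * x + c)))
      (log (1 + a / (b * x + c)) - a * b * x / ((b * x + c) * (b * x + c + a))) x := by
  have hlin : HasDerivAt (fun x => b * x + c) b x := by
    simpa using ((hasDerivAt_id x).const_mul b).add_const c
  have hpos : 0 < 1 + a / (b * x + c) := by
    rw [one_add_div hu.ne']
    exact div_pos (by linarith) hu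
  refine ((hasDerivAt_id' x).fun_mul
    ((((hasDerivAt_const x a).fun_div hlin hu.ne').const_add 1).log hpos.ne')).congr_deriv ?_
  field_simp
  ring

lemma mul_div_mul_lt_log_one_add_div {a b c x : ℝ} (ha : 0 < a) (hc : 0 ≤ c)
    (hu : 0 < b * x + c) :
    a * b * x / ((b * x + c) * (b * x + c + a)) < log (1 + a / (b * x + c)) := by
  have hv : 0 < b * x + c + a := by linarith
  have hy : 0 < a / (b * x + c) := div_pos ha hu
  calc a * b * x / ((b * x + c) * (b * x + c + a))
      ≤ a / (b * x + c + a) := by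
        rw [div_le_div_iff₀ (by positivity) hv]
        nlinarith [mul_pos ha hv]
    _ = a / (b * x + c) / (1 + a / (b * x + c)) := by field_simp
    _ < log (1 + a / (b * x + c)) := div_one_add_lt_log_one_add (by linarith) hy.ne'

/-- For reals `a > 0`, `b > 0`, `c ≥ 0`, the function
`f(x) = x · log(1 + a/(bx + c))` is strictly increasing on `(0, ∞)`. -/
theorem stmt_4 (a b c : ℝ) (ha : 0 < a) (hb : 0 < b) (hc : 0 ≤ c) :
    StrictMonoOn (fun x : ℝ => x * Real.log (1 + a / (b * x + c))) (Set.Ioi 0) := by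
  have hu : ∀ x ∈ Ioi (0 : ℝ), 0 < b * x + c := fun x hx => by
    have : 0 < b * x := mul_pos hb hx
    linarith
  have hderiv : ∀ x ∈ Ioi (0 : ℝ), HasDerivAt (fun x => x * log (1 + a / (b * x + c)))
      (log (1 + a / (b * x + c)) - a * b * x / ((b * x + c) * (b * x + c + a))) x :=
    fun x hx => hasDerivAt_mul_log_one_add_div (hu x hx) (by linarith [hu x hx])
  refine strictMonoOn_of_deriv_pos (convex_Ioi 0)
    (fun x hx => (hderiv x hx).continuousAt.continuousWithinAt) fun x hx => ?_
  rw [interior_Ioi] at hx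
  rw [(hderiv x hx).deriv, sub_pos]
  exact mul_div_mul_lt_log_one_add_div ha hc (hu x hx)
end

section
/- Let I be a nonempty finite index set, let x₀ ∈ ℝⁿ, and let m_i : ℝⁿ → ℝ be differentiable at x₀ with m_i(x₀) > 0 for all i ∈ I. Let g(x) = Σ_{i∈I} m_i(x), α_i = m_i(x₀)/g(x₀), and g̃(x) = Π_{i∈I} (m_i(x)/α_i)^{α_i}. Then g̃ is differentiable at x₀ and its Fréchet derivative at x₀ equals that of g: Dg̃(x₀) = Dg(x₀). -/
/-! If every base takes the same value `c > 0` at `x₀` and the exponents sum to one, the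
product rule gives each factor `f_i^{a_i}` the derivative `a_i c^{a_i - 1} f_i'`, multiplied by
`∏_{j ≠ i} c^{a_j} = c^{1 - a_i}`; the powers of `c` cancel and the weighted geometric mean
`∏ f_i^{a_i}` has the weighted arithmetic mean `∑ a_i f_i'` as derivative. With
`f_i = m_i / α_i` all bases equal `g(x₀)` at `x₀`, and `∑ α_i (m_i' / α_i) = Dg(x₀)`. -/

open Finset

theorem hasFDerivAt_prod_rpow_of_eq_of_sum_eq_one {E ι : Type*} [NormedAddCommGroup E]
    [NormedSpace ℝ E] {s : Finset ι} {f : ι → E → ℝ} {f' : ι → E →L[ℝ] ℝ} {a : ι → ℝ}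
    {x : E} {c : ℝ} (hc : 0 < c) (hf : ∀ i ∈ s, HasFDerivAt (f i) (f' i) x)
    (hfx : ∀ i ∈ s, f i x = c) (ha : ∑ i ∈ s, a i = 1) :
    HasFDerivAt (fun y => ∏ i ∈ s, f i y ^ a i) (∑ i ∈ s, a i • f' i) x := by
  classical
  have hfactor : ∀ i ∈ s, HasFDerivAt (fun y => f i y ^ a i) ((a i * c ^ (a i - 1)) • f' i) x :=
    fun i hi => by
      simpa only [hfx i hi] using (hf i hi).rpow_const (Or.inl (hfx i hi ▸ hc.ne'))
  refine (HasFDerivAt.finsetProd hfactor).congr_fderiv (sum_congr rfl fun i hi => ?_)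
  have hrest : ∏ j ∈ s.erase i, f j x ^ a j = c ^ (1 - a i) := by
    rw [prod_congr rfl fun j hj => by rw [hfx j (mem_of_mem_erase hj)],
      ← Real.rpow_sum_of_pos hc, ← ha, ← add_sum_erase s a hi, add_sub_cancel_left]
  rw [hrest, smul_smul, mul_left_comm, ← Real.rpow_add hc, sub_add_sub_cancel', sub_self, Real.rpow_zero,
    mul_one]

/-- With `g(x) = Σ_{i∈I} m_i(x)`, each `m_i` differentiable at `x₀` with
`m_i(x₀) > 0`, weights `α_i = m_i(x₀)/g(x₀)` and
`g̃(x) = Π_i (m_i(x)/α_i)^{α_i}`, the function `g̃` is differentiable at `x₀` and its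
Fréchet derivative at `x₀` equals that of `g`. -/
theorem stmt_11 {ι : Type*} (n : ℕ) (I : Finset ι) (hI : I.Nonempty)
    (x₀ : Fin n → ℝ) (m : ι → (Fin n → ℝ) → ℝ)
    (hm : ∀ i ∈ I, 0 < m i x₀)
    (hdiff : ∀ i ∈ I, DifferentiableAt ℝ (m i) x₀) :
    DifferentiableAt ℝ (fun x : Fin n → ℝ =>
      ∏ i ∈ I, (m i x / (m i x₀ / ∑ j ∈ I, m j x₀)) ^ (m i x₀ / ∑ j ∈ I, m j x₀)) x₀ ∧
    fderiv ℝ (fun x : Fin n → ℝ =>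
      ∏ i ∈ I, (m i x / (m i x₀ / ∑ j ∈ I, m j x₀)) ^ (m i x₀ / ∑ j ∈ I, m j x₀)) x₀
      = fderiv ℝ (fun x : Fin n → ℝ => ∑ i ∈ I, m i x) x₀ := by
  set g₀ := ∑ j ∈ I, m j x₀
  have hg₀ : 0 < g₀ := sum_pos hm hI
  have hα : ∀ i ∈ I, m i x₀ / g₀ ≠ 0 := fun i hi => (div_pos (hm i hi) hg₀).ne'
  have hbase : ∀ i ∈ I, HasFDerivAt (fun x => m i x / (m i x₀ / g₀))
      ((m i x₀ / g₀)⁻¹ • fderiv ℝ (m i) x₀) x₀ := fun i hi => by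
    simpa only [← div_eq_mul_inv] using (hdiff i hi).hasFDerivAt.mul_const (m i x₀ / g₀)⁻¹
  have hprod := hasFDerivAt_prod_rpow_of_eq_of_sum_eq_one hg₀ hbase
    (fun i hi => div_div_cancel₀ (hm i hi).ne') (by rw [← sum_div, div_self hg₀.ne'])
  have hsum : HasFDerivAt (fun x => ∑ i ∈ I, m i x) (∑ i ∈ I, fderiv ℝ (m i) x₀) x₀ :=
    HasFDerivAt.fun_sum fun i hi => (hdiff i hi).hasFDerivAt
  refine ⟨hprod.differentiableAt, ?_⟩
  rw [hprod.fderiv, hsum.fderiv]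
  exact sum_congr rfl fun i hi => by rw [smul_smul, mul_inv_cancel₀ (hα i hi), one_smul]
end
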